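/- For α, β > -1, n ≥ 1, and x ∈ [0,1], the second moment of the Beta operator is T_{n,2}^{α,β}(x) = [(α+1)(α+2) + (n - 2(α+1)(α+β+3))x + (-n + 6 + (α+β)(α+β+5))x²] / [(n+α+β+2)(n+α+β+3)]. -/

import Mathlib

open MeasureTheory intervalIntegral Filter

/-- The Beta operator with Jacobi weights: `B_n^{α,β}(f;x)`. -/
noncomputable def Bop (n α β : ℝ) (f : ℝ → ℝ) (x : ℝ) : ℝ :=
  (∫ t in (0:ℝ)..1, t ^ (n * x + α) * (1 - t) ^ (n - n * x + β) * f t) /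
  (∫ t in (0:ℝ)..1, t ^ (n * x + α) * (1 - t) ^ (n - n * x + β))

/-- The `m`-th central moment `T_{n,m}^{α,β}(x)`. -/
noncomputable def T (n α β : ℝ) (m : ℕ) (x : ℝ) : ℝ :=
  Bop n α β (fun t => (t - x) ^ m) x

/-!
With `p = n x + α` and `q = n - n x + β`, the numerator and denominator of `B_n^{α,β}` are Beta
integrals: `∫₀¹ t^p (1-t)^q dt = B(p+1, q+1)`. Expanding `(t - x)²` writes the numerator as
`B(p+3, q+1) - 2x B(p+2, q+1) + x² B(p+1, q+1)`, and the recurrence `B(a+1, b) = a/(a+b) B(a, b)`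
reduces everything to `B(p+1, q+1)`, which cancels.
-/

open ProbabilityTheory

lemma intervalIntegrable_cpow_mul_one_sub_cpow {p q : ℝ} (hp : -1 < p) (hq : -1 < q) :
    IntervalIntegrable (fun t : ℝ => (t : ℂ) ^ (p : ℂ) * (1 - (t : ℂ)) ^ (q : ℂ))
      volume 0 1 := by
  simpa using Complex.betaIntegral_convergent (u := (p : ℂ) + 1) (v := (q : ℂ) + 1)
    (by simp; linarith) (by simp; linarith)

lemma ofReal_rpow_mul_one_sub_rpow {p q t : ℝ} (ht : t ∈ Set.Icc 0 1) :
    ((t ^ p * (1 - t) ^ q : ℝ) : ℂ) = (t : ℂ) ^ (p : ℂ) * (1 - (t : ℂ)) ^ (q : ℂ) := by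
  have ht1 : 0 ≤ 1 - t := by linarith [ht.2]
  push_cast [Complex.ofReal_cpow ht.1, Complex.ofReal_cpow ht1]
  rfl

lemma intervalIntegrable_rpow_mul_one_sub_rpow {p q : ℝ} (hp : -1 < p) (hq : -1 < q) :
    IntervalIntegrable (fun t : ℝ => t ^ p * (1 - t) ^ q) volume 0 1 := by
  have h := intervalIntegrable_cpow_mul_one_sub_cpow hp hq
  refine (intervalIntegrable_congr fun t ht => ?_).mp ⟨h.1.re, h.2.re⟩
  rw [Set.uIoc_of_le zero_le_one] at ht
  simp [← ofReal_rpow_mul_one_sub_rpow (Set.Ioc_subset_Icc_self ht)]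

lemma integral_rpow_mul_one_sub_rpow {p q : ℝ} (hp : -1 < p) (hq : -1 < q) :
    ∫ t in (0 : ℝ)..1, t ^ p * (1 - t) ^ q = beta (p + 1) (q + 1) := by
  rw [beta_eq_betaIntegralReal _ _ (by linarith) (by linarith), Complex.betaIntegral]
  push_cast
  simp only [add_sub_cancel_right]
  rw [← Complex.reCLM_apply, ← ContinuousLinearMap.intervalIntegral_comp_comm _
    (intervalIntegrable_cpow_mul_one_sub_cpow hp hq)]
  refine integral_congr fun t ht => ?_
  rw [Set.uIcc_of_le zero_le_one] at ht
  simp [← ofReal_rpow_mul_one_sub_rpow ht]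

lemma beta_add_one_left {a b : ℝ} (ha : a ≠ 0) (hab : a + b ≠ 0) :
    beta (a + 1) b = a / (a + b) * beta a b := by
  rw [beta, beta, add_right_comm, Real.Gamma_add_one ha, Real.Gamma_add_one hab]
  field_simp

lemma rpow_mul_one_sub_rpow_mul_sub_sq {p q t : ℝ} (hp : -1 < p) (ht : 0 ≤ t) (x : ℝ) :
    t ^ p * (1 - t) ^ q * (t - x) ^ 2 =
      t ^ (p + 2) * (1 - t) ^ q - 2 * x * (t ^ (p + 1) * (1 - t) ^ q) +
        x ^ 2 * (t ^ p * (1 - t) ^ q) := by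
  rw [show p + 2 = p + 1 + 1 by ring, Real.rpow_add_one' ht (by linarith),
    Real.rpow_add_one' ht (by linarith)]
  ring

lemma integral_rpow_mul_one_sub_rpow_mul_sub_sq {p q : ℝ} (hp : -1 < p) (hq : -1 < q) (x : ℝ) :
    ∫ t in (0 : ℝ)..1, t ^ p * (1 - t) ^ q * (t - x) ^ 2 =
      beta (p + 3) (q + 1) - 2 * x * beta (p + 2) (q + 1) + x ^ 2 * beta (p + 1) (q + 1) := by
  have hp1 : -1 < p + 1 := by linarith
  have hp2 : -1 < p + 2 := by linarith
  rw [integral_congr fun t ht => rpow_mul_one_sub_rpow_mul_sub_sq hp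
      (by rw [Set.uIcc_of_le zero_le_one] at ht; exact ht.1) x,
    integral_add ((intervalIntegrable_rpow_mul_one_sub_rpow hp2 hq).sub
      ((intervalIntegrable_rpow_mul_one_sub_rpow hp1 hq).const_mul _))
      ((intervalIntegrable_rpow_mul_one_sub_rpow hp hq).const_mul _),
    integral_sub (intervalIntegrable_rpow_mul_one_sub_rpow hp2 hq)
      ((intervalIntegrable_rpow_mul_one_sub_rpow hp1 hq).const_mul _),
    intervalIntegral.integral_const_mul, intervalIntegral.integral_const_mul,
    integral_rpow_mul_one_sub_rpow hp hq, integral_rpow_mul_one_sub_rpow hp1 hq,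
    integral_rpow_mul_one_sub_rpow hp2 hq]
  ring_nf

lemma integral_rpow_mul_one_sub_rpow_mul_sub_sq_div {p q : ℝ} (hp : -1 < p) (hq : -1 < q)
    (x : ℝ) :
    (∫ t in (0 : ℝ)..1, t ^ p * (1 - t) ^ q * (t - x) ^ 2) /
        ∫ t in (0 : ℝ)..1, t ^ p * (1 - t) ^ q =
      ((p + 1) * (p + 2) - 2 * x * (p + 1) * (p + q + 3) + x ^ 2 * (p + q + 2) * (p + q + 3)) /
        ((p + q + 2) * (p + q + 3)) := by
  have hB2 : beta (p + 2) (q + 1) = (p + 1) / (p + q + 2) * beta (p + 1) (q + 1) := by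
    rw [show p + 2 = p + 1 + 1 by ring, beta_add_one_left (by linarith) (by linarith)]
    ring_nf
  have hB3 : beta (p + 3) (q + 1) = (p + 2) / (p + q + 3) * beta (p + 2) (q + 1) := by
    rw [show p + 3 = p + 2 + 1 by ring, beta_add_one_left (by linarith) (by linarith)]
    ring_nf
  have hB1 : beta (p + 1) (q + 1) ≠ 0 := (beta_pos (by linarith) (by linarith)).ne'
  have hpq2 : p + q + 2 ≠ 0 := by linarith
  have hpq3 : p + q + 3 ≠ 0 := by linarith
  rw [integral_rpow_mul_one_sub_rpow_mul_sub_sq hp hq, integral_rpow_mul_one_sub_rpow hp hq,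
    hB3, hB2]
  field_simp

theorem second_moment_general (α β : ℝ) (hα : α > -1) (hβ : β > -1)
    (n : ℕ) (x : ℝ) (hx : x ∈ Set.Icc (0:ℝ) 1) :
    T n α β 2 x =
      ((α + 1) * (α + 2) + (n - 2 * (α + 1) * (α + β + 3)) * x +
          (-(n:ℝ) + 6 + (α + β) * (α + β + 5)) * x ^ 2) /
        ((n + α + β + 2) * (n + α + β + 3)) := by
  have hnx : 0 ≤ (n : ℝ) * x := mul_nonneg n.cast_nonneg hx.1
  have hnx' : 0 ≤ (n : ℝ) - n * x := by nlinarith [hx.2, n.cast_nonneg (α := ℝ)]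
  rw [T, Bop, integral_rpow_mul_one_sub_rpow_mul_sub_sq_div (by linarith) (by linarith)]
  congr 1 <;> ring

theorem second_moment (α β : ℝ) (hα : α > -1) (hβ : β > -1)
    (n : ℕ) (hn : 1 ≤ n) (x : ℝ) (hx : x ∈ Set.Icc (0:ℝ) 1) :
    T n α β 2 x =
      ((α + 1) * (α + 2) + (n - 2 * (α + 1) * (α + β + 3)) * x +
          (-(n:ℝ) + 6 + (α + β) * (α + β + 5)) * x ^ 2) /
        ((n + α + β + 2) * (n + α + β + 3)) :=
  second_moment_general α β hα hβ n x hx
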